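/- arXiv:1611.08631 — 5 statements merged into one kernel-verified Lean document; each statement's English description precedes it below -/
import Mathlib

section
/- Let (g_t)_{t=s}^{e} be a real sequence (1 ≤ s < e) which is piecewise constant with change-points η_{q_1+1} < … < η_{q_2} contained in (s, e) and at least one change-point (q_1 < q_2): g is constant on [s, η_{q_1+1}], on each (η_q, η_{q+1}] for q_1+1 ≤ q ≤ q_2−1, and on (η_{q_2}, e], with g_{η_q+1} ≠ g_{η_q} for each q ∈ {q_1+1,…,q_2}. Then there exists q′ ∈ {q_1+1,…,q_2} such that |C_{η_{q′}}((g_t)_{t=s}^e)| = max_{b∈[s,e)} |C_b((g_t)_{t=s}^e)|; that is, the maximum absolute CUSUM over b is attained at a true change-point. -/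
open Finset

/-- The CUSUM statistic of the sequence `a` over the interval `[s, e]`, evaluated at
`b ∈ [s, e)`. -/
noncomputable def cusum (a : ℕ → ℝ) (s b e : ℕ) : ℝ :=
  Real.sqrt (((e : ℝ) - b) / (((e : ℝ) - s + 1) * ((b : ℝ) - s + 1))) *
      ∑ t ∈ Finset.Icc s b, a t -
    Real.sqrt (((b : ℝ) - s + 1) / (((e : ℝ) - s + 1) * ((e : ℝ) - b))) *
      ∑ t ∈ Finset.Icc (b + 1) e, a t



lemma cauchy_div (p q r s : ℝ) (hr : 0 < r) (hs : 0 < s) :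
    (p + q)^2 / (r + s) ≤ p^2/r + q^2/s := by
  rw [div_add_div _ _ (ne_of_gt hr) (ne_of_gt hs), div_le_div_iff₀ (by positivity) (by positivity)]
  nlinarith [sq_nonneg (p*s - q*r), mul_pos hr hs]

lemma segment_key (n ka kc k da dc dk t : ℝ)
    (hka : 0 < ka) (hkc : kc < n) (hak : ka ≤ k) (hkk : k ≤ kc)
    (ht0 : 0 ≤ t) (ht1 : t ≤ 1)
    (hk : k = t*ka + (1-t)*kc)
    (hdk : dk = t*da + (1-t)*dc) :
    dk^2/(k*(n-k)) ≤ max (da^2/(ka*(n-ka))) (dc^2/(kc*(n-kc))) := by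
  have hk0 : 0 < k := lt_of_lt_of_le hka hak
  have hkc0 : 0 < kc := lt_of_lt_of_le hk0 hkk
  have hnk : 0 < n - k := by linarith
  have hnka : 0 < n - ka := by linarith
  have hnkc : 0 < n - kc := by linarith
  have hu : 0 < ka*(n-ka) := by positivity
  have hw : 0 < kc*(n-kc) := by positivity
  rcases eq_or_lt_of_le ht0 with h0 | h0
  · have : t = 0 := h0.symm
    subst this
    have hkkc : k = kc := by linarith [hk]
    have : dk = dc := by linarith [hdk]
    rw [this, hkkc]; exact le_max_right _ _
  rcases eq_or_lt_of_le ht1 with h1 | h1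
  · subst h1
    have hkka : k = ka := by linarith [hk]
    have : dk = da := by linarith [hdk]
    rw [this, hkka]; exact le_max_left _ _
  have h1t : 0 < 1 - t := by linarith
  have hv : t*(ka*(n-ka)) + (1-t)*(kc*(n-kc)) ≤ k*(n-k) := by
    nlinarith [mul_nonneg (mul_nonneg ht0 (le_of_lt h1t)) (sq_nonneg (kc-ka))]
  have hvpos : 0 < t*(ka*(n-ka)) + (1-t)*(kc*(n-kc)) := by positivity
  have habs : |dk| ≤ t*|da| + (1-t)*|dc| := by
    rw [hdk]
    calc |t*da + (1-t)*dc| ≤ |t*da| + |(1-t)*dc| := abs_add_le _ _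
    _ = t*|da| + (1-t)*|dc| := by
        rw [abs_mul, abs_mul, abs_of_nonneg ht0, abs_of_nonneg (le_of_lt h1t)]
  have hsq : dk^2 ≤ (t*|da| + (1-t)*|dc|)^2 := by
    have h := abs_nonneg dk
    nlinarith [sq_abs dk]
  calc dk^2/(k*(n-k))
      ≤ (t*|da| + (1-t)*|dc|)^2 / (t*(ka*(n-ka)) + (1-t)*(kc*(n-kc))) := by
        apply div_le_div₀ (sq_nonneg _) hsq hvpos hv
    _ ≤ (t*|da|)^2/(t*(ka*(n-ka))) + ((1-t)*|dc|)^2/((1-t)*(kc*(n-kc))) :=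
        cauchy_div _ _ _ _ (by positivity) (by positivity)
    _ = t*(da^2/(ka*(n-ka))) + (1-t)*(dc^2/(kc*(n-kc))) := by
        rw [mul_pow, mul_pow, sq_abs, sq_abs]; field_simp
    _ ≤ max (da^2/(ka*(n-ka))) (dc^2/(kc*(n-kc))) := by
        have h1 := le_max_left (da^2/(ka*(n-ka))) (dc^2/(kc*(n-kc)))
        have h2 := le_max_right (da^2/(ka*(n-ka))) (dc^2/(kc*(n-kc)))
        nlinarith

lemma ratio_mono (m x y n : ℝ) (hx : 0 < x) (hxy : x ≤ y) (hyn : y < n) :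
    (x*m)^2/(x*(n-x)) ≤ (y*m)^2/(y*(n-y)) := by
  have hy : 0 < y := lt_of_lt_of_le hx hxy
  have hny : 0 < n - y := by linarith
  have hnx : 0 < n - x := by linarith
  have hn : 0 < n := by linarith
  rw [div_le_div_iff₀ (by positivity) (by positivity)]
  nlinarith [mul_nonneg (mul_nonneg (mul_nonneg (mul_nonneg (sq_nonneg m) hx.le) hy.le) hn.le)
    (sub_nonneg.2 hxy)]

lemma ratio_mono' (m x y n : ℝ) (hx : 0 < x) (hxy : x ≤ y) (hyn : y < n) :
    ((n-y)*m)^2/(y*(n-y)) ≤ ((n-x)*m)^2/(x*(n-x)) := by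
  have hy : 0 < y := lt_of_lt_of_le hx hxy
  have hny : 0 < n - y := by linarith
  have hnx : 0 < n - x := by linarith
  have hn : 0 < n := by linarith
  rw [div_le_div_iff₀ (by positivity) (by positivity)]
  nlinarith [mul_nonneg (mul_nonneg (mul_nonneg (mul_nonneg (sq_nonneg m) hnx.le) hny.le) hn.le)
    (sub_nonneg.2 hxy)]

/- ### CUSUM reformulation -/

noncomputable def Psum (g : ℕ → ℝ) (s b : ℕ) : ℝ := ∑ t ∈ Finset.Icc s b, g t

noncomputable def Dv (g : ℕ → ℝ) (s e b : ℕ) : ℝ :=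
  ((e:ℝ)-s+1) * Psum g s b - ((b:ℝ)-s+1) * Psum g s e

noncomputable def Phi (g : ℕ → ℝ) (s e b : ℕ) : ℝ :=
  (Dv g s e b)^2 / (((b:ℝ)-s+1) * (((e:ℝ)-s+1) - ((b:ℝ)-s+1)))

lemma icc_split (g : ℕ → ℝ) (s b e : ℕ) (hs : 1 ≤ s) (hsb : s ≤ b) (hbe : b ≤ e) :
    (∑ t ∈ Icc s b, g t) + (∑ t ∈ Icc (b+1) e, g t) = ∑ t ∈ Icc s e, g t := by
  have h1 : Icc s b = Ioc (s-1) b := by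
    rw [← Finset.Icc_add_one_left_eq_Ioc]; congr 1; omega
  have h2 : Icc (b+1) e = Ioc b e := Finset.Icc_add_one_left_eq_Ioc b e
  have h3 : Icc s e = Ioc (s-1) e := by
    rw [← Finset.Icc_add_one_left_eq_Ioc]; congr 1; omega
  rw [h1, h2, h3]
  exact Finset.sum_Ioc_consecutive g (by omega) hbe

lemma cusum_eq (g : ℕ → ℝ) (s b e : ℕ) (hs : 1 ≤ s) (hsb : s ≤ b) (hbe : b < e) :
    cusum g s b e = Dv g s e b /
      Real.sqrt (((e:ℝ)-s+1) * (((b:ℝ)-s+1) * ((e:ℝ)-b))) := by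
  have hsb' : (s:ℝ) ≤ b := by exact_mod_cast hsb
  have hbe' : (b:ℝ) < e := by exact_mod_cast hbe
  have hk : (0:ℝ) < (b:ℝ)-s+1 := by linarith
  have hn : (0:ℝ) < (e:ℝ)-s+1 := by linarith
  have heb : (0:ℝ) < (e:ℝ)-b := by linarith
  have h1 : Real.sqrt (((e:ℝ)-b)/(((e:ℝ)-s+1)*((b:ℝ)-s+1))) =
      ((e:ℝ)-b) / Real.sqrt (((e:ℝ)-s+1) * (((b:ℝ)-s+1) * ((e:ℝ)-b))) := by
    rw [show ((e:ℝ)-b)/(((e:ℝ)-s+1)*((b:ℝ)-s+1)) =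
        ((e:ℝ)-b)^2 / (((e:ℝ)-s+1) * (((b:ℝ)-s+1) * ((e:ℝ)-b))) by field_simp]
    rw [Real.sqrt_div (sq_nonneg _), Real.sqrt_sq heb.le]
  have h2 : Real.sqrt (((b:ℝ)-s+1)/(((e:ℝ)-s+1)*((e:ℝ)-b))) =
      ((b:ℝ)-s+1) / Real.sqrt (((e:ℝ)-s+1) * (((b:ℝ)-s+1) * ((e:ℝ)-b))) := by
    rw [show ((b:ℝ)-s+1)/(((e:ℝ)-s+1)*((e:ℝ)-b)) =
        ((b:ℝ)-s+1)^2 / (((e:ℝ)-s+1) * (((b:ℝ)-s+1) * ((e:ℝ)-b))) by field_simp]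
    rw [Real.sqrt_div (sq_nonneg _), Real.sqrt_sq hk.le]
  have hsum := icc_split g s b e hs hsb hbe.le
  rw [cusum, h1, h2,
    show (∑ t ∈ Icc (b+1) e, g t) = (∑ t ∈ Icc s e, g t) - ∑ t ∈ Icc s b, g t by linarith]
  simp only [Dv, Psum]
  ring

lemma abs_cusum_le (g : ℕ → ℝ) (s b b' e : ℕ) (hs : 1 ≤ s) (hsb : s ≤ b) (hbe : b < e)
    (hsb' : s ≤ b') (hbe' : b' < e) (h : Phi g s e b ≤ Phi g s e b') :
    |cusum g s b e| ≤ |cusum g s b' e| := by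
  have key : ∀ c, s ≤ c → c < e → |cusum g s c e| =
      Real.sqrt (Phi g s e c / ((e:ℝ)-s+1)) := by
    intro c hsc hce
    have hsc' : (s:ℝ) ≤ c := by exact_mod_cast hsc
    have hce' : (c:ℝ) < e := by exact_mod_cast hce
    have hk : (0:ℝ) < (c:ℝ)-s+1 := by linarith
    have hn : (0:ℝ) < (e:ℝ)-s+1 := by linarith
    have hec : (0:ℝ) < (e:ℝ)-c := by linarith
    rw [cusum_eq g s c e hs hsc hce, abs_div, abs_of_nonneg (Real.sqrt_nonneg _),
      ← Real.sqrt_sq_eq_abs, ← Real.sqrt_div (sq_nonneg _)]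
    congr 1
    simp only [Phi]
    rw [div_div]
    congr 1
    ring
  rw [key b hsb hbe, key b' hsb' hbe']
  apply Real.sqrt_le_sqrt
  have hn : (0:ℝ) < (e:ℝ)-s+1 := by
    have : (s:ℝ) < e := by exact_mod_cast (lt_of_le_of_lt hsb hbe)
    linarith
  gcongr

lemma sum_const_stretch (g : ℕ → ℝ) (a b : ℕ) (γ : ℝ) (hab : a ≤ b)
    (hg : ∀ t, a < t → t ≤ b → g t = γ) :
    ∑ t ∈ Icc (a+1) b, g t = ((b:ℝ) - (a:ℝ)) * γ := by
  rw [Finset.sum_eq_card_nsmul (fun t ht => by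
    rw [Finset.mem_Icc] at ht; exact hg t (by omega) ht.2), Nat.card_Icc]
  have h : b + 1 - (a+1) = b - a := by omega
  rw [h, nsmul_eq_mul, Nat.cast_sub hab]

lemma Psum_seg (g : ℕ → ℝ) (s a b : ℕ) (γ : ℝ) (hs : 1 ≤ s) (hsa : s ≤ a + 1) (hab : a ≤ b)
    (hg : ∀ t, a < t → t ≤ b → g t = γ) :
    Psum g s b = Psum g s a + ((b:ℝ) - (a:ℝ)) * γ := by
  rcases Nat.lt_or_ge a s with h | h
  · have ha : a = s - 1 := by omega
    have h1 : Icc s a = ∅ := Finset.Icc_eq_empty (by omega)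
    have h2 : Icc (a+1) b = Icc s b := by congr 1; omega
    simp only [Psum]
    rw [h1, Finset.sum_empty, ← h2, sum_const_stretch g a b γ hab hg]
    ring
  · have := icc_split g s a b hs h hab
    simp only [Psum]
    rw [← this, sum_const_stretch g a b γ hab hg]

lemma Psum_const (g : ℕ → ℝ) (s b : ℕ) (hs : 1 ≤ s) (hsb : s ≤ b)
    (hg : ∀ t, s ≤ t → t ≤ b → g t = g s) :
    Psum g s b = ((b:ℝ) - s + 1) * g s := by
  have h := Psum_seg g s (s-1) b (g s) hs (by omega) (by omega)
    (fun t h1 h2 => hg t (by omega) h2)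
  have h0 : Psum g s (s-1) = 0 := by
    simp only [Psum]
    rw [Finset.Icc_eq_empty (by omega), Finset.sum_empty]
  rw [h, h0, Nat.cast_sub hs]
  push_cast
  ring

/-- Lemma 3 of the paper, after Venkatraman (1992):
for a piecewise constant sequence `g` on `[s, e]` whose change-points
`η (q₁+1) < … < η q₂` all lie in the open interval `(s, e)` (and there is at least one,
i.e. `q₁ < q₂`), the maximum of `|C_b(g)|` over `b ∈ [s, e)` is attained at one of the
true change-points. -/
theorem maxAbsCusum_attained_at_changePoint
    (s e : ℕ) (hs : 1 ≤ s) (hse : s < e) (g : ℕ → ℝ)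
    (η : ℕ → ℕ) (q₁ q₂ : ℕ) (hq : q₁ < q₂)
    -- the change-points are strictly increasing
    (hmono : ∀ q, q₁ + 1 ≤ q → q < q₂ → η q < η (q + 1))
    -- the change-points are contained in (s, e)
    (hin : ∀ q, q₁ + 1 ≤ q → q ≤ q₂ → s < η q ∧ η q < e)
    -- g is constant between consecutive change-points: if no change-point lies in [t, t'),
    -- then g t = g t'
    (hconst : ∀ t t', s ≤ t → t ≤ t' → t' ≤ e →
      (∀ q, q₁ + 1 ≤ q → q ≤ q₂ → ¬(t ≤ η q ∧ η q < t')) → g t = g t')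
    -- g genuinely jumps at each change-point
    (hjump : ∀ q, q₁ + 1 ≤ q → q ≤ q₂ → g (η q + 1) ≠ g (η q)) :
    ∃ q', q₁ + 1 ≤ q' ∧ q' ≤ q₂ ∧ ∀ b, s ≤ b → b < e →
      |cusum g s b e| ≤ |cusum g s (η q') e| := by
  have hmono' : ∀ q r, q₁ + 1 ≤ q → q ≤ r → r ≤ q₂ → η q ≤ η r := by
    intro q r hq0 hqr
    induction r, hqr using Nat.le_induction with
    | base => intro _; exact le_rfl
    | succ n hn ih =>
      intro hr
      exact le_trans (ih (by omega)) (le_of_lt (hmono n (by omega) (by omega)))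
  have hgc : ∀ q, q₁ + 1 ≤ q → q ≤ q₂ → ∀ t, η q < t → t ≤ e →
      (q = q₂ ∨ t ≤ η (q + 1)) → g t = g (η q + 1) := by
    intro q hq1 hq2 t ht1 ht2 hcase
    refine (hconst (η q + 1) t (by have := (hin q hq1 hq2).1; omega) ht1 ht2 ?_).symm
    rintro r hr1 hr2 ⟨ha, hb⟩
    by_cases hrq : r ≤ q
    · have := hmono' r q hr1 hrq hq2; omega
    · rcases hcase with h | h
      · omega
      · have := hmono' (q+1) r (by omega) (by omega) hr2; omega
  have hgc0 : ∀ t, s ≤ t → t ≤ η (q₁+1) → g t = g s := by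
    intro t h1 h2
    refine (hconst s t le_rfl h1 (le_trans h2 (le_of_lt (hin _ le_rfl (by omega)).2)) ?_).symm
    rintro r hr1 hr2 ⟨ha, hb⟩
    have := hmono' (q₁+1) r le_rfl hr1 hr2; omega
  obtain ⟨q', hq'mem, hq'max⟩ := Finset.exists_max_image (Finset.Icc (q₁+1) q₂)
    (fun q => Phi g s e (η q)) ⟨q₁+1, by rw [Finset.mem_Icc]; omega⟩
  rw [Finset.mem_Icc] at hq'mem
  refine ⟨q', hq'mem.1, hq'mem.2, fun b hb1 hb2 => ?_⟩
  have hq'in := hin q' hq'mem.1 hq'mem.2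
  apply abs_cusum_le g s b (η q') e hs hb1 hb2 (le_of_lt hq'in.1) hq'in.2
  rcases le_or_gt b (η (q₁+1)) with hb3 | hb3
  · -- b in the first constant stretch
    have hcin := hin (q₁+1) le_rfl (by omega)
    have hPb : Psum g s b = ((b:ℝ)-s+1) * g s :=
      Psum_const g s b hs hb1 (fun t h1 h2 => hgc0 t h1 (le_trans h2 hb3))
    have hPc : Psum g s (η (q₁+1)) = ((η (q₁+1):ℝ)-s+1) * g s :=
      Psum_const g s (η (q₁+1)) hs (le_of_lt hcin.1) (fun t h1 h2 => hgc0 t h1 h2)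
    have hDb : Dv g s e b = ((b:ℝ)-s+1) * (((e:ℝ)-s+1) * g s - Psum g s e) := by
      simp only [Dv]; rw [hPb]; ring
    have hDc : Dv g s e (η (q₁+1)) =
        ((η (q₁+1):ℝ)-s+1) * (((e:ℝ)-s+1) * g s - Psum g s e) := by
      simp only [Dv]; rw [hPc]; ring
    have step : Phi g s e b ≤ Phi g s e (η (q₁+1)) := by
      simp only [Phi]
      rw [hDb, hDc]
      apply ratio_mono
      · have : (s:ℝ) ≤ b := by exact_mod_cast hb1
        linarith
      · have : (b:ℝ) ≤ η (q₁+1) := by exact_mod_cast hb3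
        linarith
      · have : ((η (q₁+1)):ℝ) < e := by exact_mod_cast hcin.2
        linarith
    exact le_trans step (hq'max (q₁+1) (by rw [Finset.mem_Icc]; omega))
  rcases le_or_gt (η q₂) b with hb4 | hb4
  · -- b in the last constant stretch
    have hain := hin q₂ (by omega) le_rfl
    have hγ : ∀ t, η q₂ < t → t ≤ e → g t = g (η q₂ + 1) :=
      fun t h1 h2 => hgc q₂ (by omega) le_rfl t h1 h2 (Or.inl rfl)
    have hP : ∀ x:ℕ, η q₂ ≤ x → x ≤ e →
        Psum g s x = Psum g s (η q₂) + ((x:ℝ)-(η q₂:ℝ)) * g (η q₂ + 1) :=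
      fun x h1 h2 => Psum_seg g s (η q₂) x _ hs (by have := hain.1; omega) h1
        (fun t ht1 ht2 => hγ t ht1 (le_trans ht2 h2))
    have hD : ∀ x:ℕ, η q₂ ≤ x → x ≤ e → Dv g s e x =
        ((((e:ℝ)-s+1) - ((x:ℝ)-s+1))) *
          (Psum g s (η q₂) + ((e:ℝ)-(η q₂:ℝ)) * g (η q₂ + 1) - ((e:ℝ)-s+1) * g (η q₂ + 1)) := by
      intro x h1 h2
      simp only [Dv]
      rw [hP x h1 h2, hP e (le_of_lt hain.2) le_rfl]
      ring
    have hDb := hD b hb4 (le_of_lt hb2)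
    have hDa := hD (η q₂) le_rfl (le_of_lt hain.2)
    have step : Phi g s e b ≤ Phi g s e (η q₂) := by
      simp only [Phi]
      rw [hDb, hDa]
      apply ratio_mono'
      · have : (s:ℝ) < η q₂ := by exact_mod_cast hain.1
        linarith
      · have : ((η q₂):ℝ) ≤ b := by exact_mod_cast hb4
        linarith
      · have : (b:ℝ) < e := by exact_mod_cast hb2
        linarith
    exact le_trans step (hq'max q₂ (by rw [Finset.mem_Icc]; omega))
  · -- b strictly between two change-points
    have hne : (Finset.filter (fun r => η r ≤ b) (Finset.Icc (q₁+1) q₂)).Nonempty :=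
      ⟨q₁+1, by rw [Finset.mem_filter, Finset.mem_Icc]; exact ⟨⟨le_rfl, by omega⟩, le_of_lt hb3⟩⟩
    set q := (Finset.filter (fun r => η r ≤ b) (Finset.Icc (q₁+1) q₂)).max' hne with hqdef
    have hqQ := Finset.max'_mem _ hne
    rw [Finset.mem_filter, Finset.mem_Icc] at hqQ
    obtain ⟨⟨hq1, hq2⟩, hqb⟩ := hqQ
    have hqlt : q < q₂ := by
      rcases eq_or_lt_of_le hq2 with h | h
      · exfalso; rw [h] at hqb; omega
      · exact h
    have hbc : b < η (q+1) := by
      by_contra hcon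
      push_neg at hcon
      have hmem : q+1 ∈ (Finset.filter (fun r => η r ≤ b) (Finset.Icc (q₁+1) q₂)) := by
        rw [Finset.mem_filter, Finset.mem_Icc]; exact ⟨⟨by omega, by omega⟩, hcon⟩
      have := Finset.le_max' _ (q+1) hmem
      omega
    have hain := hin q hq1 hq2
    have hcin := hin (q+1) (by omega) (by omega)
    have hac : η q < η (q+1) := hmono q hq1 hqlt
    have hγ : ∀ t, η q < t → t ≤ η (q+1) → g t = g (η q + 1) :=
      fun t h1 h2 => hgc q hq1 hq2 t h1 (le_trans h2 (le_of_lt hcin.2)) (Or.inr h2)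
    have hP : ∀ x:ℕ, η q ≤ x → x ≤ η (q+1) →
        Psum g s x = Psum g s (η q) + ((x:ℝ)-(η q:ℝ)) * g (η q + 1) :=
      fun x h1 h2 => Psum_seg g s (η q) x _ hs (by have := hain.1; omega) h1
        (fun t ht1 ht2 => hγ t ht1 (le_trans ht2 h2))
    have hPb := hP b hqb (le_of_lt hbc)
    have hPc := hP (η (q+1)) (le_of_lt hac) le_rfl
    have has' : (s:ℝ) < η q := by exact_mod_cast hain.1
    have hab' : ((η q):ℝ) ≤ b := by exact_mod_cast hqb
    have hbc' : (b:ℝ) ≤ η (q+1) := by exact_mod_cast (le_of_lt hbc)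
    have hac' : ((η q):ℝ) < η (q+1) := by exact_mod_cast hac
    have hce' : ((η (q+1)):ℝ) < e := by exact_mod_cast hcin.2
    have hcane : ((η (q+1)):ℝ) - (η q:ℝ) ≠ 0 := by linarith
    have step : Phi g s e b ≤ max (Phi g s e (η q)) (Phi g s e (η (q+1))) := by
      simp only [Phi]
      apply segment_key ((e:ℝ)-s+1) (((η q):ℝ)-s+1) (((η (q+1)):ℝ)-s+1) ((b:ℝ)-s+1)
        _ _ _ ((((η (q+1)):ℝ)-b)/(((η (q+1)):ℝ)-(η q:ℝ)))
      · linarith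
      · linarith
      · linarith
      · linarith
      · apply div_nonneg <;> linarith
      · rw [div_le_one (by linarith)]; linarith
      · field_simp
        ring
      · simp only [Dv]
        rw [hPb, hPc]
        field_simp
        ring
    refine le_trans step (max_le (hq'max q (by rw [Finset.mem_Icc]; omega))
      (hq'max (q+1) (by rw [Finset.mem_Icc]; omega)))
end

section
/- Let (g_t)_{t=1}^{T} be a step function with a single change-point at η_1 ∈ (1,T) and jump size δ = |g_{η_1+1} − g_{η_1}| > 0. Then there exists an absolute constant C_3 > 0 such that for any ε_T > 0 and c_0 > 0 with c_0 ε_T ≤ η_1 ∧ (T − η_1), and any b′ ∈ [1,T) with |b′ − η_1| ≥ c_0 ε_T, one has |C_{η_1}((g_t)_{t=1}^T) − C_{b′}((g_t)_{t=1}^T)| ≥ C_3 c_0 ε_T · |C_{η_1}((g_t)_{t=1}^T)| · T/(η_1(T−η_1)). -/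
/-! On either side of the change-point the CUSUM of the step function is the jump times a fixed
factor times `w(x) = √(x / (T (T - x)))`, with `x = b` left of `η₁` and `x = T - b` right of it.
Both cases therefore reduce to a lower bound for the increment of `w` on `[x, y]`: since
`w(y)² - w(x)² = (y - x) / ((T - x) (T - y))` and `w(x) ≤ w(y)`, the increment is at least
`(y - x) / (2 w(y) (T - x) (T - y))`, and `c₀ ε_T ≤ min (y - x) (T - y)` turns this into the claim
with `C₃ = 1/4`. -/

open Finset

noncomputable def cusumWeight (T x : ℝ) : ℝ := √(x / (T * (T - x)))

theorem cusumWeight_nonneg (T x : ℝ) : 0 ≤ cusumWeight T x := Real.sqrt_nonneg _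

theorem cusumWeight_sq {T x : ℝ} (hx : 0 ≤ x) (hxT : x < T) :
    cusumWeight T x ^ 2 = x / (T * (T - x)) :=
  Real.sq_sqrt (div_nonneg hx (mul_nonneg (hx.trans_lt hxT).le (sub_pos.mpr hxT).le))

theorem cusumWeight_le_cusumWeight {T x y : ℝ} (hx : 0 ≤ x) (hxy : x ≤ y) (hyT : y < T) :
    cusumWeight T x ≤ cusumWeight T y := by
  have hT : 0 < T := (hx.trans hxy).trans_lt hyT
  refine Real.sqrt_le_sqrt (div_le_div₀ (hx.trans hxy) hxy ?_ ?_)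
  · exact mul_pos hT (sub_pos.mpr hyT)
  · gcongr

theorem cusumWeight_sub_mul {T x : ℝ} (hx : 0 < x) (hxT : x < T) :
    cusumWeight T (T - x) * x = cusumWeight T x * (T - x) := by
  have hTx : 0 < T - x := sub_pos.mpr hxT
  have sqrt_mul_eq {p q : ℝ} (hq : 0 ≤ q) : √p * q = √(p * q ^ 2) := by
    rw [Real.sqrt_mul' _ (sq_nonneg q), Real.sqrt_sq hq]
  rw [cusumWeight, cusumWeight, sub_sub_cancel, sqrt_mul_eq hx.le, sqrt_mul_eq hTx.le]
  congr 1
  field_simp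

theorem cusum_one_eq (g : ℕ → ℝ) (b T : ℕ) :
    cusum g 1 b T = cusumWeight T (T - b) * ∑ t ∈ Ioc 0 b, g t -
      cusumWeight T b * ∑ t ∈ Ioc b T, g t := by
  simp only [cusum, cusumWeight, Nat.cast_one, sub_add_cancel, sub_sub_cancel,
    Icc_add_one_left_eq_Ioc, ← Icc_add_one_left_eq_Ioc 0 b, zero_add]

theorem sum_Ioc_of_forall_eq {g : ℕ → ℝ} {c : ℝ} {u v : ℕ} (huv : u ≤ v)
    (h : ∀ t, u < t → t ≤ v → g t = c) :
    ∑ t ∈ Ioc u v, g t = ((v : ℝ) - u) * c := by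
  rw [sum_eq_card_nsmul fun t ht ↦ h t (mem_Ioc.mp ht).1 (mem_Ioc.mp ht).2, Nat.card_Ioc,
    nsmul_eq_mul, Nat.cast_sub huv]

section StepFunction

variable {g : ℕ → ℝ} {a a' : ℝ} {η T b : ℕ}

theorem cusum_of_le_changePoint (hb : 0 < b) (hbη : b ≤ η) (hηT : η < T)
    (ha : ∀ t, 1 ≤ t → t ≤ η → g t = a) (ha' : ∀ t, η < t → t ≤ T → g t = a') :
    cusum g 1 b T = (T - η) * (a - a') * cusumWeight T b := by
  rw [cusum_one_eq, sum_Ioc_of_forall_eq b.zero_le fun t h0 ht ↦ ha t h0 (ht.trans hbη),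
    ← sum_Ioc_consecutive _ hbη hηT.le,
    sum_Ioc_of_forall_eq hbη fun t hbt ht ↦ ha t (hb.trans hbt) ht,
    sum_Ioc_of_forall_eq hηT.le ha']
  have hweight := cusumWeight_sub_mul (T := T) (Nat.cast_pos.mpr hb)
    (by exact_mod_cast hbη.trans_lt hηT)
  push_cast
  linear_combination a * hweight

theorem cusum_of_changePoint_le (hη : 0 < η) (hηb : η ≤ b) (hbT : b < T)
    (ha : ∀ t, 1 ≤ t → t ≤ η → g t = a) (ha' : ∀ t, η < t → t ≤ T → g t = a') :
    cusum g 1 b T = η * (a - a') * cusumWeight T (T - b) := by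
  rw [cusum_one_eq, ← sum_Ioc_consecutive _ η.zero_le hηb, sum_Ioc_of_forall_eq η.zero_le ha,
    sum_Ioc_of_forall_eq hηb fun t h0 ht ↦ ha' t h0 (ht.trans hbT.le),
    sum_Ioc_of_forall_eq hbT.le fun t hbt ht ↦ ha' t (hηb.trans_lt hbt) ht]
  have hweight := cusumWeight_sub_mul (T := T) (Nat.cast_pos.mpr (hη.trans_le hηb))
    (by exact_mod_cast hbT)
  push_cast
  linear_combination a' * hweight

end StepFunction

section Increment

variable {T x y d : ℝ}

theorem quarter_mul_cusumWeight_div_le_sub (hx : 0 ≤ x) (hxy : x < y) (hyT : y < T)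
    (hd : d ≤ y - x) (hd' : d ≤ T - y) :
    1 / 4 * d * cusumWeight T y * T / (y * (T - y)) ≤ cusumWeight T y - cusumWeight T x := by
  have hy : 0 < y := hx.trans_lt hxy
  have hT : 0 < T := hy.trans hyT
  have hTy : 0 < T - y := sub_pos.mpr hyT
  have hTx : 0 < T - x := by linarith
  set u := cusumWeight T y
  set v := cusumWeight T x
  have hu : 0 < u := Real.sqrt_pos.mpr (by positivity)
  have hu2 : u ^ 2 = y / (T * (T - y)) := cusumWeight_sq hy.le hyT
  have hdiff : u ^ 2 - v ^ 2 = (y - x) / ((T - x) * (T - y)) := by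
    rw [hu2, cusumWeight_sq hx (hxy.trans hyT)]
    field_simp
    ring
  have hdT : d * (T - x) ≤ 2 * (y - x) * (T - y) := by
    nlinarith [mul_le_mul_of_nonneg_right hd hTy.le,
      mul_le_mul_of_nonneg_left hd' (sub_pos.mpr hxy).le]
  calc 1 / 4 * d * u * T / (y * (T - y)) = d / (4 * (T - y) ^ 2) / u := by
        field_simp
        rw [hu2]
        field_simp
    _ ≤ (y - x) / (2 * (T - x) * (T - y)) / u := by
        gcongr ?_ / _
        rw [div_le_div_iff₀ (by positivity) (by positivity)]
        nlinarith [mul_le_mul_of_nonneg_right hdT hTy.le]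
    _ = (u ^ 2 - v ^ 2) / (2 * u) := by
        rw [hdiff]
        field_simp
    _ ≤ u - v := by
        rw [div_le_iff₀ (by positivity)]
        nlinarith [sq_nonneg (u - v)]

theorem quarter_mul_abs_mul_cusumWeight_div_le_abs_sub (K : ℝ) (hx : 0 ≤ x) (hxy : x < y)
    (hyT : y < T) (hd : d ≤ y - x) (hd' : d ≤ T - y) :
    1 / 4 * d * |K * cusumWeight T y| * T / (y * (T - y)) ≤
      |K * cusumWeight T y - K * cusumWeight T x| := by
  rw [← mul_sub, abs_mul, abs_mul, abs_of_nonneg (cusumWeight_nonneg T y),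
    abs_of_nonneg (sub_nonneg.mpr (cusumWeight_le_cusumWeight hx hxy.le hyT))]
  calc 1 / 4 * d * (|K| * cusumWeight T y) * T / (y * (T - y))
      = |K| * (1 / 4 * d * cusumWeight T y * T / (y * (T - y))) := by ring
    _ ≤ |K| * (cusumWeight T y - cusumWeight T x) :=
        mul_le_mul_of_nonneg_left (quarter_mul_cusumWeight_div_le_sub hx hxy hyT hd hd')
          (abs_nonneg K)

end Increment

/-- Lemma 6 of the paper: for a step function `g` on `[1, T]` with a
single change-point at `η₁ ∈ (1, T)` and positive jump size, there is an absolute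
constant `C₃ > 0` such that for any `ε_T, c₀ > 0` with `c₀ ε_T ≤ η₁ ∧ (T - η₁)` and
any `b' ∈ [1, T)` with `|b' - η₁| ≥ c₀ ε_T`,
`|C_{η₁}(g) - C_{b'}(g)| ≥ C₃ c₀ ε_T |C_{η₁}(g)| T / (η₁ (T - η₁))`. -/
theorem cusum_drop_away_from_single_changePoint :
    ∃ C₃ : ℝ, 0 < C₃ ∧
      ∀ (T η₁ : ℕ) (a a' : ℝ) (g : ℕ → ℝ) (εT c₀ : ℝ) (b' : ℕ),
        1 < η₁ → η₁ < T →
        (∀ t, 1 ≤ t → t ≤ η₁ → g t = a) →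
        (∀ t, η₁ < t → t ≤ T → g t = a') →
        a ≠ a' → 0 < εT → 0 < c₀ →
        c₀ * εT ≤ ((min η₁ (T - η₁) : ℕ) : ℝ) →
        1 ≤ b' → b' < T → c₀ * εT ≤ |(b' : ℝ) - (η₁ : ℝ)| →
        C₃ * c₀ * εT * |cusum g 1 η₁ T| * (T : ℝ) / ((η₁ : ℝ) * ((T : ℝ) - η₁)) ≤
          |cusum g 1 η₁ T - cusum g 1 b' T| := by
  refine ⟨1 / 4, by norm_num, ?_⟩
  intro T η a a' g εT c₀ b' hη hηT ha ha' _ hε hc hmin hb hbT hdist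
  rw [Nat.cast_min, Nat.cast_sub hηT.le, le_min_iff] at hmin
  have hηT' : (η : ℝ) < T := by exact_mod_cast hηT
  rcases lt_trichotomy b' η with hlt | rfl | hgt
  · have hlt' : (b' : ℝ) < η := by exact_mod_cast hlt
    rw [abs_sub_comm, abs_of_pos (sub_pos.mpr hlt')] at hdist
    rw [cusum_of_le_changePoint (by omega) le_rfl hηT ha ha',
      cusum_of_le_changePoint hb hlt.le hηT ha ha', mul_assoc (1 / 4 : ℝ)]
    exact quarter_mul_abs_mul_cusumWeight_div_le_abs_sub _ b'.cast_nonneg hlt' hηT' hdist hmin.2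
  · simp only [sub_self, abs_zero] at hdist
    exact absurd hdist (mul_pos hc hε).not_ge
  · have hgt' : (η : ℝ) < b' := by exact_mod_cast hgt
    have hbT' : (b' : ℝ) < T := by exact_mod_cast hbT
    rw [abs_of_pos (sub_pos.mpr hgt')] at hdist
    rw [cusum_of_changePoint_le (by omega) le_rfl hηT ha ha',
      cusum_of_changePoint_le (by omega) hgt.le hbT ha ha', mul_assoc (1 / 4 : ℝ)]
    have hdrop := quarter_mul_abs_mul_cusumWeight_div_le_abs_sub (η * (a - a'))
      (x := T - b') (y := T - η) (d := c₀ * εT) (sub_nonneg.mpr hbT'.le)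
      (sub_lt_sub_left hgt' _) (sub_lt_self _ (by positivity)) (by linarith) (by linarith)
    rwa [sub_sub_cancel, mul_comm ((T : ℝ) - η)] at hdrop
end

section
/- Let (g_t)_{t=s}^{e} be piecewise constant with change-points contained in (s,e) and ∑_{t=s}^{e} g_t = 0, and suppose there exists a change-point η_q ∈ (s,e) such that (η_q − s + 1) ∧ (e − η_q) > c_2 T^β, the jump satisfies |g_{η_q+1} − g_{η_q}| ≥ δ > 0, and g is constant on (η_q − c_2 T^β, η_q] and on (η_q, η_q + c_2 T^β]. Then there exists a change-point η_{q′} ∈ (s,e) and a constant C_4 > 0 (depending only on c_2) such that |C_{η_{q′}}((g_t)_{t=s}^e)| = max_{b∈[s,e)} |C_b((g_t)_{t=s}^e)| ≥ C_4 δ T^{β−1/2}, where e − s + 1 ≤ T. -/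
open Finset

/-! Write `S_b = ∑_{t=s}^b g_t` and `n = e - s + 1`. Since `∑ g = 0`,
`C_b² = n S_b² / ((b - s + 1)(e - b))`, so `|C_b| ≤ M` says `S_b² ≤ (M² / n) (b - s + 1)(e - b)`.
Between consecutive change-points `S` is affine in `b`, and the square of an affine function minus a
concave quadratic is convex; hence the inequality at the change-points (and at `s - 1` and `e`,
where both sides vanish) spreads to every `b`, and the maximum is attained at a change-point.
It also gives `2 |S_b| ≤ M √n ≤ M √T` for all `b`. For the lower bound, the second difference
`S_{η+d} - 2 S_η + S_{η-d} = d (g_{η+1} - g_η)`, with a window `d ≍ c₂ T^β` on which `g` is flat on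
both sides of `η`, forces `d δ ≤ 2 M √T`. -/

theorem affine_sq_le_of_endpoints {α γ c p q x₀ x x₁ : ℝ} (hc : 0 ≤ c) (h₀ : x₀ ≤ x) (h₁ : x ≤ x₁)
    (hx₀ : (α * x₀ + γ) ^ 2 ≤ c * ((x₀ - p) * (q - x₀)))
    (hx₁ : (α * x₁ + γ) ^ 2 ≤ c * ((x₁ - p) * (q - x₁))) :
    (α * x + γ) ^ 2 ≤ c * ((x - p) * (q - x)) := by
  -- `x ↦ (α x + γ)² - c (x - p)(q - x)` is a convex quadratic with leading coefficient `α² + c`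
  have key : (x₁ - x₀) * ((α * x + γ) ^ 2 - c * ((x - p) * (q - x))) =
      (x₁ - x) * ((α * x₀ + γ) ^ 2 - c * ((x₀ - p) * (q - x₀))) +
        (x - x₀) * ((α * x₁ + γ) ^ 2 - c * ((x₁ - p) * (q - x₁))) -
        (α ^ 2 + c) * ((x - x₀) * (x₁ - x) * (x₁ - x₀)) := by ring
  rcases h₀.eq_or_lt with rfl | hlt
  · exact hx₀
  have h₀' := sub_nonneg.2 h₀
  have h₁' := sub_nonneg.2 h₁
  nlinarith [mul_nonneg h₁' (sub_nonneg.2 hx₀), mul_nonneg h₀' (sub_nonneg.2 hx₁),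
    mul_nonneg (add_nonneg (sq_nonneg α) hc) (mul_nonneg (mul_nonneg h₀' h₁') (add_nonneg h₀' h₁'))]

theorem eq_of_forall_succ_eq {α : Type*} {f : ℕ → α} {a b : ℕ}
    (h : ∀ t, a ≤ t → t < b → f (t + 1) = f t) : ∀ t, a ≤ t → t ≤ b → f t = f a := by
  intro t hat htb
  induction t, hat using Nat.le_induction with
  | base => rfl
  | succ t hat ih => rw [h t hat htb, ih (by omega)]

theorem sq_sqrt_add_sqrt {p q : ℝ} (hp : 0 < p) (hq : 0 < q) :
    (√(q / ((p + q) * p)) + √(p / ((p + q) * q))) ^ 2 = (p + q) / (p * q) := by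
  have hmul : √(q / ((p + q) * p)) * √(p / ((p + q) * q)) = 1 / (p + q) := by
    rw [← Real.sqrt_mul (by positivity), show q / ((p + q) * p) * (p / ((p + q) * q)) =
      (1 / (p + q)) ^ 2 by field_simp, Real.sqrt_sq (by positivity)]
  rw [add_sq, Real.sq_sqrt (by positivity), Real.sq_sqrt (by positivity), mul_assoc 2, hmul]
  field_simp
  ring

section PartialSums

variable (g : ℕ → ℝ) {s e : ℕ}

theorem sum_Icc_add_sum_Icc {m n : ℕ} (hs : s ≤ m + 1) (hmn : m ≤ n) :
    ∑ t ∈ Icc s m, g t + ∑ t ∈ Icc (m + 1) n, g t = ∑ t ∈ Icc s n, g t := by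
  simp only [← Ico_add_one_right_eq_Icc]
  exact sum_Ico_consecutive g hs (by omega)

theorem sum_Icc_eq_of_eq_const {m n : ℕ} {v : ℝ} (hs : s ≤ m + 1) (hmn : m ≤ n)
    (hg : ∀ t, m < t → t ≤ n → g t = v) :
    ∑ t ∈ Icc s n, g t = ∑ t ∈ Icc s m, g t + ((n : ℝ) - m) * v := by
  rw [← sum_Icc_add_sum_Icc g hs hmn]
  congr 1
  rw [sum_congr rfl fun t ht => hg t (by rw [mem_Icc] at ht; omega) (mem_Icc.1 ht).2, sum_const,
    Nat.card_Icc, nsmul_eq_mul, Nat.cast_sub (by omega)]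
  push_cast
  ring

theorem cusum_sq {b : ℕ} (hsb : s ≤ b) (hbe : b < e) (hsum : ∑ t ∈ Icc s e, g t = 0) :
    cusum g s b e ^ 2 =
      ((e : ℝ) - s + 1) * (∑ t ∈ Icc s b, g t) ^ 2 / (((b : ℝ) - s + 1) * ((e : ℝ) - b)) := by
  have hp : (0 : ℝ) < (b : ℝ) - s + 1 := by
    have : (s : ℝ) ≤ b := by exact_mod_cast hsb
    linarith
  have hq : (0 : ℝ) < (e : ℝ) - b := by
    have : (b : ℝ) < e := by exact_mod_cast hbe
    linarith
  have hright : ∑ t ∈ Icc (b + 1) e, g t = -∑ t ∈ Icc s b, g t := by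
    linarith [sum_Icc_add_sum_Icc g (by omega : s ≤ b + 1) hbe.le]
  have hn : (e : ℝ) - s + 1 = ((b : ℝ) - s + 1) + ((e : ℝ) - b) := by ring
  rw [cusum, hright, hn, mul_comm _ (_ ^ 2), mul_div_assoc, ← sq_sqrt_add_sqrt hp hq]
  ring

theorem abs_cusum_le_iff {b : ℕ} {M : ℝ} (hM : 0 ≤ M) (hsb : s ≤ b) (hbe : b < e)
    (hsum : ∑ t ∈ Icc s e, g t = 0) :
    |cusum g s b e| ≤ M ↔
      (∑ t ∈ Icc s b, g t) ^ 2 ≤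
        M ^ 2 / ((e : ℝ) - s + 1) * (((b : ℝ) - s + 1) * ((e : ℝ) - b)) := by
  have hp : (0 : ℝ) < (b : ℝ) - s + 1 := by
    have : (s : ℝ) ≤ b := by exact_mod_cast hsb
    linarith
  have hq : (0 : ℝ) < (e : ℝ) - b := by
    have : (b : ℝ) < e := by exact_mod_cast hbe
    linarith
  rw [← sq_le_sq₀ (abs_nonneg _) hM, sq_abs, cusum_sq g hsb hbe hsum,
    div_le_iff₀ (by positivity), div_mul_eq_mul_div, le_div_iff₀ (by linarith)]
  constructor <;> intro h <;> linarith

theorem sq_sum_Icc_le_of_changePoints {c p q : ℝ} (hc : 0 ≤ c) {x₀ x₁ : ℕ} (hs : s ≤ x₀ + 1)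
    (h₀ : (∑ t ∈ Icc s x₀, g t) ^ 2 ≤ c * ((x₀ - p) * (q - x₀)))
    (h₁ : (∑ t ∈ Icc s x₁, g t) ^ 2 ≤ c * ((x₁ - p) * (q - x₁)))
    (hch : ∀ b, x₀ < b → b < x₁ → g (b + 1) ≠ g b →
      (∑ t ∈ Icc s b, g t) ^ 2 ≤ c * ((b - p) * (q - b)))
    {b : ℕ} (hb₀ : x₀ ≤ b) (hb₁ : b ≤ x₁) :
    (∑ t ∈ Icc s b, g t) ^ 2 ≤ c * ((b - p) * (q - b)) := by
  induction hn : x₁ - x₀ using Nat.strong_induction_on generalizing x₀ x₁ with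
  | _ n ih =>
  by_cases hm : ∃ m, x₀ < m ∧ m < x₁ ∧ g (m + 1) ≠ g m
  · obtain ⟨m, hm₀, hm₁, hgm⟩ := hm
    rcases le_total b m with hbm | hmb
    · exact ih (m - x₀) (by omega) hs h₀ (hch m hm₀ hm₁ hgm)
        (fun b h h' => hch b h (by omega)) hb₀ hbm rfl
    · exact ih (x₁ - m) (by omega) (by omega) (hch m hm₀ hm₁ hgm) h₁
        (fun b h h' => hch b (by omega) h') hmb hb₁ rfl
  push Not at hm
  have hconst := eq_of_forall_succ_eq (f := g) (a := x₀ + 1) (b := x₁)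
    fun t ht htx => hm t (by omega) htx
  have haff : ∀ t, x₀ ≤ t → t ≤ x₁ → ∑ r ∈ Icc s t, g r =
      g (x₀ + 1) * t + (∑ r ∈ Icc s x₀, g r - g (x₀ + 1) * x₀) := fun t ht htx => by
    rw [sum_Icc_eq_of_eq_const g hs ht fun r hr hrt => hconst r hr (by omega)]
    ring
  rw [haff b hb₀ hb₁]
  refine affine_sq_le_of_endpoints hc (Nat.cast_le.2 hb₀) (Nat.cast_le.2 hb₁) ?_ ?_
  · rwa [← haff x₀ le_rfl (by omega)]
  · rwa [← haff x₁ (by omega) le_rfl]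

theorem abs_cusum_le_of_changePoints (hs : 1 ≤ s) (hsum : ∑ t ∈ Icc s e, g t = 0) {M : ℝ}
    (hM : 0 ≤ M) (hch : ∀ b, s ≤ b → b < e → g (b + 1) ≠ g b → |cusum g s b e| ≤ M)
    {b : ℕ} (hsb : s ≤ b) (hbe : b < e) : |cusum g s b e| ≤ M := by
  have hn : (0 : ℝ) < (e : ℝ) - s + 1 := by
    have : (s : ℝ) ≤ e := by exact_mod_cast (hsb.trans hbe.le)
    linarith
  have hQ := sq_sum_Icc_le_of_changePoints g (s := s) (c := M ^ 2 / ((e : ℝ) - s + 1))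
    (p := (s : ℝ) - 1) (q := e) (x₀ := s - 1) (x₁ := e) (by positivity) (by omega)
    (by simp [Nat.cast_sub hs, Icc_eq_empty_of_lt (Nat.sub_one_lt_of_lt hs)])
    (by simp [hsum])
    (fun b hb₀ hb₁ hgb => by
      convert (abs_cusum_le_iff g hM (by omega) hb₁ hsum).1 (hch b (by omega) hb₁ hgb) using 3
      ring)
    (b := b) (by omega) hbe.le
  rw [abs_cusum_le_iff g hM hsb hbe hsum]
  convert hQ using 3
  ring

theorem two_mul_abs_sum_Icc_le (hsum : ∑ t ∈ Icc s e, g t = 0) {M : ℝ} (hM : 0 ≤ M)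
    (hmax : ∀ b, s ≤ b → b < e → |cusum g s b e| ≤ M) {b : ℕ} (hsb : s ≤ b) (hbe : b ≤ e) :
    2 * |∑ t ∈ Icc s b, g t| ≤ M * √((e : ℝ) - s + 1) := by
  obtain rfl | hbe := hbe.eq_or_lt
  · rw [hsum, abs_zero, mul_zero]
    positivity
  have hQ := (abs_cusum_le_iff g hM hsb hbe hsum).1 (hmax b hsb hbe)
  have hn : (0 : ℝ) < (e : ℝ) - s + 1 := by
    have : (s : ℝ) < e := by exact_mod_cast hsb.trans_lt hbe
    linarith
  -- `(b - s + 1) (e - b) ≤ (e - s + 1)² / 4` by AM-GM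
  have hpq : M ^ 2 / ((e : ℝ) - s + 1) * (((b : ℝ) - s + 1) * ((e : ℝ) - b)) ≤
      M ^ 2 * ((e : ℝ) - s + 1) / 4 := by
    rw [div_mul_eq_mul_div, div_le_div_iff₀ hn (by norm_num)]
    have := mul_nonneg (sq_nonneg M) (sq_nonneg ((b : ℝ) - s + 1 - (e - b)))
    nlinarith
  rw [← sq_le_sq₀ (by positivity) (by positivity), mul_pow, mul_pow, sq_abs,
    Real.sq_sqrt hn.le]
  linarith

theorem second_diff_sum_Icc {η d : ℕ} (hd : s + d ≤ η)
    (hL : ∀ t, η - d < t → t ≤ η → g t = g η) (hR : ∀ t, η < t → t ≤ η + d → g t = g (η + 1)) :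
    ∑ t ∈ Icc s (η + d), g t - 2 * ∑ t ∈ Icc s η, g t + ∑ t ∈ Icc s (η - d), g t =
      d * (g (η + 1) - g η) := by
  rw [sum_Icc_eq_of_eq_const g (m := η) (by omega) (by omega) hR,
    sum_Icc_eq_of_eq_const g (m := η - d) (n := η) (by omega) (by omega) hL,
    Nat.cast_sub (by omega : d ≤ η)]
  push_cast
  ring

theorem mul_le_four_mul_of_jump {x δ M : ℝ} {η : ℕ} (hx : 0 < x) (hδ : 0 ≤ δ) (hsη : s < η)
    (hηe : η < e)
    (hmin : x < ((min (η - s + 1) (e - η) : ℕ) : ℝ)) (hjump : δ ≤ |g (η + 1) - g η|)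
    (hL : ∀ t : ℕ, (η : ℝ) - x < t → t ≤ η → g t = g η)
    (hR : ∀ t : ℕ, η < t → (t : ℝ) ≤ η + x → g t = g (η + 1))
    (hS : ∀ b, s ≤ b → b ≤ e → 2 * |∑ t ∈ Icc s b, g t| ≤ M) :
    x * δ ≤ 4 * M := by
  -- the half-width `d ≥ 1` of a window around `η` on which `g` has only the jump at `η`
  obtain ⟨d, hd⟩ : ∃ d, d = max 1 ⌊x⌋₊ := ⟨_, rfl⟩
  have hfloor : ⌊x⌋₊ < min (η - s + 1) (e - η) := (Nat.floor_lt hx.le).2 hmin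
  have hdx : d = 1 ∨ (d : ℝ) ≤ x := by
    rcases max_choice 1 ⌊x⌋₊ with h | h
    · exact .inl (hd.trans h)
    · exact .inr (hd.trans h ▸ Nat.floor_le hx.le)
  have hxd : x ≤ 2 * d := by
    have h : ((⌊x⌋₊ + 1 : ℕ) : ℝ) ≤ ((2 * d : ℕ) : ℝ) := by exact_mod_cast (by omega)
    push_cast at h
    linarith [Nat.lt_floor_add_one x]
  have hL' : ∀ t, η - d < t → t ≤ η → g t = g η := fun t ht htη => by
    refine hL t ?_ htη
    have : (η : ℝ) + 1 ≤ t + d := by exact_mod_cast (by omega : η + 1 ≤ t + d)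
    rcases hdx with h | h
    · rw [h] at this; push_cast at this; linarith
    · linarith
  have hR' : ∀ t, η < t → t ≤ η + d → g t = g (η + 1) := fun t hηt ht => by
    rcases hdx with h | h
    · rw [show t = η + 1 by omega]
    · have : (t : ℝ) ≤ η + d := by exact_mod_cast ht
      exact hR t hηt (by linarith)
  have hdiff := second_diff_sum_Icc g (s := s) (by omega) hL' hR'
  have hdδ : d * δ ≤ 2 * M := by
    calc (d : ℝ) * δ ≤ |d * (g (η + 1) - g η)| := by
          rw [abs_mul, Nat.abs_cast]; gcongr
      _ ≤ |∑ t ∈ Icc s (η + d), g t| + 2 * |∑ t ∈ Icc s η, g t| + |∑ t ∈ Icc s (η - d), g t| := by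
          rw [← hdiff]
          have h₁ := abs_add_le (∑ t ∈ Icc s (η + d), g t - 2 * ∑ t ∈ Icc s η, g t)
            (∑ t ∈ Icc s (η - d), g t)
          have h₂ := abs_sub (∑ t ∈ Icc s (η + d), g t) (2 * ∑ t ∈ Icc s η, g t)
          rw [abs_mul, abs_two] at h₂
          linarith
      _ ≤ 2 * M := by
          linarith [hS _ (by omega) (by omega : η + d ≤ e), hS η hsη.le hηe.le,
            hS (η - d) (by omega) (by omega)]
  nlinarith

end PartialSums

/-- Lemma 8 of the paper: if `g` on `[s, e]` (with `∑ g = 0` and all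
its change-points in `(s, e)`, i.e. no change at `s`) has a change-point `η ∈ (s, e)` with
`(η - s + 1) ∧ (e - η) > c₂ T^β`, jump at least `δ > 0`, and `g` constant on
`(η - c₂ T^β, η]` and on `(η, η + c₂ T^β]`, then the maximum of `|C_b(g)|` over
`b ∈ [s, e)` is attained at a change-point `η' ∈ (s, e)` and is at least
`C₄ δ T^{β - 1/2}`, where `C₄ > 0` depends only on `c₂`. -/
theorem maxAbsCusum_lower_bound (c₂ : ℝ) (hc₂ : 0 < c₂) :
    ∃ C₄ : ℝ, 0 < C₄ ∧
      ∀ (T s e η : ℕ) (β : ℝ) (g : ℕ → ℝ) (δ : ℝ),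
        1 ≤ s → s < e → e ≤ T → 0 < β → β ≤ 1 → 0 < δ →
        (∑ t ∈ Finset.Icc s e, g t) = 0 →
        -- no change-point at the boundary point s
        g (s + 1) = g s →
        -- η is a change-point in (s, e), sufficiently distanced from both ends
        s < η → η < e →
        c₂ * (T : ℝ) ^ β < ((min (η - s + 1) (e - η) : ℕ) : ℝ) →
        δ ≤ |g (η + 1) - g η| →
        -- g is constant on (η - c₂ T^β, η] and on (η, η + c₂ T^β]
        (∀ t : ℕ, (η : ℝ) - c₂ * (T : ℝ) ^ β < (t : ℝ) → t ≤ η → g t = g η) →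
        (∀ t : ℕ, η < t → (t : ℝ) ≤ (η : ℝ) + c₂ * (T : ℝ) ^ β → g t = g (η + 1)) →
        ∃ η' : ℕ, s < η' ∧ η' < e ∧ g (η' + 1) ≠ g η' ∧
          (∀ b, s ≤ b → b < e → |cusum g s b e| ≤ |cusum g s η' e|) ∧
          C₄ * δ * (T : ℝ) ^ (β - 1 / 2) ≤ |cusum g s η' e| := by
  refine ⟨c₂ / 4, by positivity, ?_⟩
  intro T s e η β g δ hs hse heT _ _ hδ hsum hnos hsη hηe hmin hjump hflatL hflatR
  have hT : (0 : ℝ) < T := by exact_mod_cast (by omega : 0 < T)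
  have hjumpη : g (η + 1) ≠ g η := fun h => by
    rw [h, sub_self, abs_zero] at hjump
    linarith
  obtain ⟨η', hη', hmaxCh⟩ := ((Ico s e).filter fun b => g (b + 1) ≠ g b).exists_max_image
    (fun b => |cusum g s b e|) ⟨η, by simp [hsη.le, hηe, hjumpη]⟩
  simp only [mem_filter, mem_Ico, and_imp] at hη' hmaxCh
  obtain ⟨⟨hsη', hη'e⟩, hchη'⟩ := hη'
  have hmax : ∀ b, s ≤ b → b < e → |cusum g s b e| ≤ |cusum g s η' e| := fun b =>
    abs_cusum_le_of_changePoints g hs hsum (abs_nonneg _) hmaxCh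
  have hnT : √((e : ℝ) - s + 1) ≤ √T := Real.sqrt_le_sqrt (by
    have : (e : ℝ) + 1 ≤ T + s := by exact_mod_cast (by omega : e + 1 ≤ T + s)
    linarith)
  have hxδ := mul_le_four_mul_of_jump g (mul_pos hc₂ (Real.rpow_pos_of_pos hT β)) hδ.le hsη hηe
    hmin hjump hflatL hflatR fun b hsb hbe =>
      (two_mul_abs_sum_Icc_le g hsum (abs_nonneg _) hmax hsb hbe).trans
        (mul_le_mul_of_nonneg_left hnT (abs_nonneg _))
  refine ⟨η', hsη'.lt_of_ne (by rintro rfl; exact hchη' hnos), hη'e, hchη', hmax, ?_⟩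
  rw [Real.rpow_sub hT, ← Real.sqrt_eq_rpow, mul_div_assoc', div_le_iff₀ (Real.sqrt_pos.2 hT)]
  linarith
end

section
/- Fix b ∈ [1,T), m ∈ {1,…,n} and φ ∈ [0,1]. Let (k_1,…,k_n) be a permutation of {1,…,n} with |X^{k_1}_{1,b,T}| ≥ … ≥ |X^{k_n}_{1,b,T}|, and define the vector p^φ_{b,m} ∈ R^n by [p^φ_{b,m}]_{k_j} = sign(X^{k_j}_{1,b,T}) · σ_{k_j}^{−1} {m(2n−m)/(2n)}^φ / m for j ≤ m, and [p^φ_{b,m}]_{k_j} = −sign(X^{k_j}_{1,b,T}) · σ_{k_j}^{−1} {m(2n−m)/(2n)}^φ / (2n−m) for j > m. Then D^φ_m({|X^{(j)}_{1,b,T}|}_{j=1}^n) = C_b({⟨x_t, p^φ_{b,m}⟩}_{t=1}^T), where x_t = (x_{1,t},…,x_{n,t})ᵀ; i.e., the double CUSUM statistic equals the CUSUM, at b, of the univariate series obtained by projecting the panel data onto p^φ_{b,m}. -/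
open Finset

/-- The ordered (descending in absolute value ... here: given values, sorted in
decreasing order) rearrangement of the vector `v`. -/
noncomputable def ordStat {n : ℕ} (v : Fin n → ℝ) : Fin n → ℝ :=
  fun j => v ((Tuple.sort fun i => -v i) j)

/-- The double CUSUM statistic `D^φ_m` applied to the (absolute) CUSUM values `v`,
which are first sorted in decreasing order. -/
noncomputable def dcusum (n : ℕ) (φ : ℝ) (m : ℕ) (v : Fin n → ℝ) : ℝ :=
  ((m : ℝ) * (2 * (n : ℝ) - m) / (2 * (n : ℝ))) ^ φ *
    ((1 / (m : ℝ)) * ∑ j : Fin n, (if (j : ℕ) < m then ordStat v j else 0) -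
      (1 / (2 * (n : ℝ) - m)) * ∑ j : Fin n, (if m ≤ (j : ℕ) then ordStat v j else 0))

/-- The sign of a real number, with `sign 0 = 1`. -/
noncomputable def sign' (x : ℝ) : ℝ := if 0 ≤ x then 1 else -1

lemma sign'_mul_self (x : ℝ) : sign' x * x = |x| := by
  unfold sign'
  split
  · rw [abs_of_nonneg ‹_›]; ring
  · rw [abs_of_neg (lt_of_not_ge ‹_›)]; ring

lemma cusum_smul (c : ℝ) (a : ℕ → ℝ) (s b e : ℕ) :
    cusum (fun t => c * a t) s b e = c * cusum a s b e := by
  unfold cusum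
  rw [← Finset.mul_sum, ← Finset.mul_sum]
  ring

lemma cusum_sum {ι : Type*} (s' : Finset ι) (a : ι → ℕ → ℝ) (s b e : ℕ) :
    cusum (fun t => ∑ i ∈ s', a i t) s b e = ∑ i ∈ s', cusum (a i) s b e := by
  unfold cusum
  rw [Finset.sum_comm, @Finset.sum_comm _ _ _ _ (Finset.Icc (b + 1) e) s',
    Finset.mul_sum, Finset.mul_sum, ← Finset.sum_sub_distrib]

lemma ordStat_eq {n : ℕ} (v : Fin n → ℝ) (k : Equiv.Perm (Fin n))
    (h : ∀ i i' : Fin n, i ≤ i' → v (k i') ≤ v (k i)) (j : Fin n) :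
    ordStat v j = v (k j) := by
  have hmono : Monotone ((fun i => -v i) ∘ k) := fun i i' hii' => by
    simp only [Function.comp, neg_le_neg_iff]
    exact h i i' hii'
  have hsort : (fun i => -v i) ∘ k = (fun i => -v i) ∘ Tuple.sort (fun i => -v i) :=
    Tuple.comp_sort_eq_comp_iff_monotone.mpr hmono
  have := congrFun hsort j
  simp only [Function.comp] at this
  simp only [ordStat]
  linarith

/-- Remark 1 of the paper: at fixed `b` and `m`, the double CUSUM
statistic equals the CUSUM at `b` of the univariate series obtained by projecting the
panel data onto the vector `p^φ_{b,m}`. -/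
theorem dcusum_eq_cusum_of_projection
    (n T : ℕ) (hn : 1 ≤ n) (x : Fin n → ℕ → ℝ) (σ : Fin n → ℝ) (hσ : ∀ j, 0 < σ j)
    (b m : ℕ) (hb : 1 ≤ b ∧ b < T) (hm : 1 ≤ m ∧ m ≤ n) (φ : ℝ) (hφ : 0 ≤ φ ∧ φ ≤ 1)
    -- a permutation arranging the absolute CUSUMs in decreasing order
    (k : Equiv.Perm (Fin n))
    (hdesc : ∀ i i' : Fin n, i ≤ i' →
      |cusum (fun t => x (k i') t / σ (k i')) 1 b T| ≤
        |cusum (fun t => x (k i) t / σ (k i)) 1 b T|)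
    -- the projection vector p^φ_{b,m}
    (p : Fin n → ℝ)
    (hp : ∀ i : Fin n,
      p i = if ((k.symm i : Fin n) : ℕ) < m
        then sign' (cusum (fun t => x i t / σ i) 1 b T) * (σ i)⁻¹ *
          (((m : ℝ) * (2 * (n : ℝ) - m) / (2 * (n : ℝ))) ^ φ) * (1 / (m : ℝ))
        else -sign' (cusum (fun t => x i t / σ i) 1 b T) * (σ i)⁻¹ *
          (((m : ℝ) * (2 * (n : ℝ) - m) / (2 * (n : ℝ))) ^ φ) * (1 / (2 * (n : ℝ) - m))) :
    dcusum n φ m (fun j => |cusum (fun t => x j t / σ j) 1 b T|) =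
      cusum (fun t => ∑ i : Fin n, x i t * p i) 1 b T := by
  have hord : ∀ j : Fin n,
      ordStat (fun j => |cusum (fun t => x j t / σ j) 1 b T|) j
        = |cusum (fun t => x (k j) t / σ (k j)) 1 b T| :=
    ordStat_eq _ k (fun i i' h => hdesc i i' h)
  have hscal : ∀ i : Fin n, cusum (x i) 1 b T =
      σ i * cusum (fun t => x i t / σ i) 1 b T := by
    intro i
    have hne : σ i ≠ 0 := (hσ i).ne'
    have h1 : cusum (fun t => σ i * (x i t / σ i)) 1 b T =
        σ i * cusum (fun t => x i t / σ i) 1 b T := cusum_smul _ _ _ _ _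
    have h2 : (fun t => σ i * (x i t / σ i)) = x i := by
      funext t; rw [mul_div_cancel₀ _ hne]
    rwa [h2] at h1
  have hrhs : cusum (fun t => ∑ i : Fin n, x i t * p i) 1 b T
      = ∑ i : Fin n, p i * (σ i * cusum (fun t => x i t / σ i) 1 b T) := by
    rw [show (fun t => ∑ i : Fin n, x i t * p i) = fun t => ∑ i : Fin n, p i * x i t by
      funext t; exact Finset.sum_congr rfl fun i _ => mul_comm _ _]
    rw [cusum_sum]
    exact Finset.sum_congr rfl fun i _ => by rw [← hscal i, ← cusum_smul]
  rw [hrhs]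
  rw [← Equiv.sum_comp k
    (fun i => p i * (σ i * cusum (fun t => x i t / σ i) 1 b T))]
  set A : ℝ := ((m : ℝ) * (2 * (n : ℝ) - m) / (2 * (n : ℝ))) ^ φ with hA
  have hterm : ∀ j : Fin n,
      p (k j) * (σ (k j) * cusum (fun t => x (k j) t / σ (k j)) 1 b T) =
      if (j : ℕ) < m then A * (1 / (m:ℝ)) * |cusum (fun t => x (k j) t / σ (k j)) 1 b T|
      else -(A * (1 / (2*(n:ℝ) - m)) * |cusum (fun t => x (k j) t / σ (k j)) 1 b T|) := by
    intro j
    have hσne : σ (k j) ≠ 0 := (hσ (k j)).ne'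
    have hinv : (σ (k j))⁻¹ * σ (k j) = 1 := inv_mul_cancel₀ hσne
    set cj : ℝ := cusum (fun t => x (k j) t / σ (k j)) 1 b T with hcj
    rw [hp (k j)]
    simp only [Equiv.symm_apply_apply, ← hcj]
    split
    · rw [show sign' cj * (σ (k j))⁻¹ * A * (1 / (m:ℝ)) * (σ (k j) * cj) =
          ((σ (k j))⁻¹ * σ (k j)) * (A * (1 / (m:ℝ)) * (sign' cj * cj)) from by ring,
        hinv, sign'_mul_self, one_mul]
    · rw [show -sign' cj * (σ (k j))⁻¹ * A * (1 / (2*(n:ℝ)-m)) * (σ (k j) * cj) =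
          -(((σ (k j))⁻¹ * σ (k j)) * (A * (1 / (2*(n:ℝ)-m)) * (sign' cj * cj))) from by ring,
        hinv, sign'_mul_self, one_mul]
  rw [Finset.sum_congr rfl fun j _ => hterm j]
  unfold dcusum
  rw [← hA]
  simp only [hord]
  rw [Finset.sum_ite, Finset.sum_ite]
  simp only [Finset.sum_const_zero, add_zero, zero_add]
  rw [← Finset.sum_filter_add_sum_filter_not Finset.univ (fun j : Fin n => (j : ℕ) < m)
    (fun j => if (j:ℕ) < m then A * (1/(m:ℝ)) * |cusum (fun t => x (k j) t / σ (k j)) 1 b T|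
      else -(A * (1/(2*(n:ℝ)-m)) * |cusum (fun t => x (k j) t / σ (k j)) 1 b T|))]
  rw [Finset.sum_congr rfl (fun j hj => if_pos (Finset.mem_filter.mp hj).2),
    Finset.sum_congr rfl
      (g := fun j => -(A * (1/(2*(n:ℝ)-m)) * |cusum (fun t => x (k j) t / σ (k j)) 1 b T|))
      (fun j hj => if_neg (Finset.mem_filter.mp hj).2)]
  have hfe : Finset.univ.filter (fun j : Fin n => m ≤ (j:ℕ)) =
      Finset.univ.filter (fun j : Fin n => ¬ (j:ℕ) < m) := by
    apply Finset.filter_congr; intro j _; simp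
  rw [hfe, Finset.sum_neg_distrib, ← Finset.mul_sum, ← Finset.mul_sum]
  ring
end

section
/- Let (g_t)_{t=s}^{e} be a step function with a single change-point at η ∈ (s,e) (g_t constant on [s,η] and constant on (η,e]) and suppose max_{s≤t≤e} |g_t| ≤ M. Then max_{b∈[s,e)} |C_b((g_t)_{t=s}^e)| = |C_η((g_t)_{t=s}^e)| ≤ 2M·√((η−s+1) ∧ (e−η)). -/
open Finset

private lemma sqrt_shift (x y N : ℝ) (hx : 0 ≤ x) (hy : 0 ≤ y) (hN : 0 ≤ N) :
    Real.sqrt (y / (N * x)) * x = y * Real.sqrt (x / (N * y)) := by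
  rcases eq_or_lt_of_le hx with h | hx
  · simp [← h]
  rcases eq_or_lt_of_le hy with h | hy
  · simp [← h]
  rcases eq_or_lt_of_le hN with h | hN
  · simp [← h]
  have h1 : Real.sqrt (y / (N * x)) * x = Real.sqrt ((y / (N * x)) * x ^ 2) := by
    rw [Real.sqrt_mul (by positivity), Real.sqrt_sq hx.le]
  have h2 : y * Real.sqrt (x / (N * y)) = Real.sqrt (y ^ 2 * (x / (N * y))) := by
    rw [Real.sqrt_mul (by positivity), Real.sqrt_sq hy.le]
  rw [h1, h2]
  congr 1
  field_simp

private lemma cusum_left (s b η e : ℕ) (g : ℕ → ℝ) (a a' : ℝ)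
    (hsb : s ≤ b) (hbη : b ≤ η) (hηe : η < e)
    (hga : ∀ t, s ≤ t → t ≤ η → g t = a)
    (hga' : ∀ t, η < t → t ≤ e → g t = a') :
    cusum g s b e =
      (a - a') * (((e : ℝ) - η) *
        Real.sqrt (((b : ℝ) - s + 1) / (((e : ℝ) - s + 1) * ((e : ℝ) - b)))) := by
  have hbe : b < e := lt_of_le_of_lt hbη hηe
  have hsum1 : ∑ t ∈ Finset.Icc s b, g t = ((b : ℝ) - s + 1) * a := by
    rw [Finset.sum_congr rfl fun t ht => hga t (Finset.mem_Icc.mp ht).1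
      ((Finset.mem_Icc.mp ht).2.trans hbη), Finset.sum_const, Nat.card_Icc,
      nsmul_eq_mul, Nat.cast_sub (by omega)]
    push_cast
    ring
  have hsum2 : ∑ t ∈ Finset.Icc (b + 1) e, g t = ((η : ℝ) - b) * a + ((e : ℝ) - η) * a' := by
    rw [Finset.Icc_add_one_left_eq_Ioc, ← Finset.sum_Ioc_consecutive g hbη hηe.le]
    have h1 : ∑ t ∈ Finset.Ioc b η, g t = ((η : ℝ) - b) * a := by
      rw [Finset.sum_congr rfl fun t ht => hga t
          (by have := (Finset.mem_Ioc.mp ht).1; omega) (Finset.mem_Ioc.mp ht).2,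
        Finset.sum_const, Nat.card_Ioc, nsmul_eq_mul, Nat.cast_sub hbη]
    have h2 : ∑ t ∈ Finset.Ioc η e, g t = ((e : ℝ) - η) * a' := by
      rw [Finset.sum_congr rfl fun t ht => hga' t (Finset.mem_Ioc.mp ht).1
          (Finset.mem_Ioc.mp ht).2,
        Finset.sum_const, Nat.card_Ioc, nsmul_eq_mul, Nat.cast_sub hηe.le]
    rw [h1, h2]
  have hb' : (s : ℝ) ≤ b := by exact_mod_cast hsb
  have hbe' : (b : ℝ) < e := by exact_mod_cast hbe
  have key := sqrt_shift ((b : ℝ) - s + 1) ((e : ℝ) - b) ((e : ℝ) - s + 1)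
    (by linarith) (by linarith) (by linarith)
  unfold cusum
  rw [hsum1, hsum2]
  linear_combination a * key

private lemma cusum_right (s b η e : ℕ) (g : ℕ → ℝ) (a a' : ℝ)
    (hs : 1 ≤ s) (hsη : s ≤ η) (hηb : η ≤ b) (hbe : b < e)
    (hga : ∀ t, s ≤ t → t ≤ η → g t = a)
    (hga' : ∀ t, η < t → t ≤ e → g t = a') :
    cusum g s b e =
      (a - a') * (((η : ℝ) - s + 1) *
        Real.sqrt (((e : ℝ) - b) / (((e : ℝ) - s + 1) * ((b : ℝ) - s + 1)))) := by
  have hsb : s ≤ b := hsη.trans hηb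
  have hIcc : Finset.Icc s b = Finset.Ioc (s - 1) b := by
    rw [← Finset.Icc_add_one_left_eq_Ioc]
    congr 1
    omega
  have hsum1 : ∑ t ∈ Finset.Icc s b, g t = ((η : ℝ) - s + 1) * a + ((b : ℝ) - η) * a' := by
    rw [hIcc, ← Finset.sum_Ioc_consecutive g (show s - 1 ≤ η by omega) hηb]
    have h1 : ∑ t ∈ Finset.Ioc (s - 1) η, g t = ((η : ℝ) - s + 1) * a := by
      rw [Finset.sum_congr rfl fun t ht => hga t
          (by have := (Finset.mem_Ioc.mp ht).1; omega) (Finset.mem_Ioc.mp ht).2,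
        Finset.sum_const, Nat.card_Ioc, nsmul_eq_mul, Nat.cast_sub (by omega),
        Nat.cast_sub hs]
      push_cast
      ring
    have h2 : ∑ t ∈ Finset.Ioc η b, g t = ((b : ℝ) - η) * a' := by
      rw [Finset.sum_congr rfl fun t ht => hga' t (Finset.mem_Ioc.mp ht).1
          (by have := (Finset.mem_Ioc.mp ht).2; omega),
        Finset.sum_const, Nat.card_Ioc, nsmul_eq_mul, Nat.cast_sub hηb]
    rw [h1, h2]
  have hsum2 : ∑ t ∈ Finset.Icc (b + 1) e, g t = ((e : ℝ) - b) * a' := by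
    rw [Finset.sum_congr rfl fun t ht => hga' t
        (by have := (Finset.mem_Icc.mp ht).1; omega) (Finset.mem_Icc.mp ht).2,
      Finset.sum_const, Nat.card_Icc, nsmul_eq_mul, Nat.cast_sub (by omega)]
    push_cast
    ring
  have hb' : (s : ℝ) ≤ b := by exact_mod_cast hsb
  have hbe' : (b : ℝ) < e := by exact_mod_cast hbe
  have key := sqrt_shift ((e : ℝ) - b) ((b : ℝ) - s + 1) ((e : ℝ) - s + 1)
    (by linarith) (by linarith) (by linarith)
  unfold cusum
  rw [hsum1, hsum2]
  linear_combination (-a') * key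

/-- key bound in the termination argument of the DCBS algorithm:
for a step function `g` on `[s, e]` with a single change-point at `η ∈ (s, e)` and
`|g_t| ≤ M`, the maximum absolute CUSUM over `b ∈ [s, e)` is attained at `η` and is
at most `2M √((η-s+1) ∧ (e-η))`. -/
theorem maxAbsCusum_bound_single_changePoint
    (s e η : ℕ) (g : ℕ → ℝ) (a a' M : ℝ)
    (hs : 1 ≤ s) (hη₁ : s < η) (hη₂ : η < e)
    (hga : ∀ t, s ≤ t → t ≤ η → g t = a)
    (hga' : ∀ t, η < t → t ≤ e → g t = a')
    (hM : ∀ t, s ≤ t → t ≤ e → |g t| ≤ M) :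
    (∀ b, s ≤ b → b < e → |cusum g s b e| ≤ |cusum g s η e|) ∧
      |cusum g s η e| ≤ 2 * M * Real.sqrt ((min (η - s + 1) (e - η) : ℕ) : ℝ) := by
  have hs' : (s : ℝ) < η := by exact_mod_cast hη₁
  have hη' : (η : ℝ) < e := by exact_mod_cast hη₂
  have hN : (0 : ℝ) < (e : ℝ) - s + 1 := by linarith
  have hn1 : (0 : ℝ) < (η : ℝ) - s + 1 := by linarith
  have hn2 : (0 : ℝ) < (e : ℝ) - η := by linarith
  have hcηL : cusum g s η e = (a - a') * (((e : ℝ) - η) *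
      Real.sqrt (((η : ℝ) - s + 1) / (((e : ℝ) - s + 1) * ((e : ℝ) - η)))) :=
    cusum_left s η η e g a a' hη₁.le le_rfl hη₂ hga hga'
  have hcηR : cusum g s η e = (a - a') * (((η : ℝ) - s + 1) *
      Real.sqrt (((e : ℝ) - η) / (((e : ℝ) - s + 1) * ((η : ℝ) - s + 1)))) :=
    cusum_right s η η e g a a' hs hη₁.le le_rfl hη₂ hga hga'
  constructor
  · intro b hsb hbe
    have hb' : (s : ℝ) ≤ b := by exact_mod_cast hsb
    have hbe' : (b : ℝ) < e := by exact_mod_cast hbe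
    rcases le_or_gt b η with hbη | hηb
    · have hbη' : (b : ℝ) ≤ η := by exact_mod_cast hbη
      rw [cusum_left s b η e g a a' hsb hbη hη₂ hga hga', hcηL]
      have h1 : Real.sqrt (((b : ℝ) - s + 1) / (((e : ℝ) - s + 1) * ((e : ℝ) - b))) ≤
          Real.sqrt (((η : ℝ) - s + 1) / (((e : ℝ) - s + 1) * ((e : ℝ) - η))) := by
        apply Real.sqrt_le_sqrt
        rw [div_le_div_iff₀ (mul_pos hN (by linarith)) (mul_pos hN hn2)]
        nlinarith [mul_nonneg (sub_nonneg.2 hbη') (sub_nonneg.2 hbη'),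
          mul_nonneg (sub_nonneg.2 hbη') (by linarith : (0:ℝ) ≤ (b:ℝ) - s + 1),
          mul_nonneg (sub_nonneg.2 hbη') hn2.le]
      simp only [abs_mul, abs_of_nonneg (Real.sqrt_nonneg _), abs_of_nonneg hn2.le]
      exact mul_le_mul_of_nonneg_left (mul_le_mul_of_nonneg_left h1 hn2.le) (abs_nonneg _)
    · have hηb' : (η : ℝ) ≤ b := by exact_mod_cast hηb.le
      rw [cusum_right s b η e g a a' hs hη₁.le hηb.le hbe hga hga', hcηR]
      have h1 : Real.sqrt (((e : ℝ) - b) / (((e : ℝ) - s + 1) * ((b : ℝ) - s + 1))) ≤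
          Real.sqrt (((e : ℝ) - η) / (((e : ℝ) - s + 1) * ((η : ℝ) - s + 1))) := by
        apply Real.sqrt_le_sqrt
        rw [div_le_div_iff₀ (mul_pos hN (by linarith)) (mul_pos hN hn1)]
        nlinarith [mul_nonneg (sub_nonneg.2 hηb') (sub_nonneg.2 hηb'),
          mul_nonneg (sub_nonneg.2 hηb') hn2.le,
          mul_nonneg (sub_nonneg.2 hηb') hn1.le]
      simp only [abs_mul, abs_of_nonneg (Real.sqrt_nonneg _), abs_of_nonneg hn1.le]
      exact mul_le_mul_of_nonneg_left (mul_le_mul_of_nonneg_left h1 hn1.le) (abs_nonneg _)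
  · have hm : ((min (η - s + 1) (e - η) : ℕ) : ℝ) = min ((η : ℝ) - s + 1) ((e : ℝ) - η) := by
      have h1 : ((η - s + 1 : ℕ) : ℝ) = (η : ℝ) - s + 1 := by
        have h : η - s + 1 = η + 1 - s := by omega
        rw [h, Nat.cast_sub (by omega)]
        push_cast
        ring
      have h2 : ((e - η : ℕ) : ℝ) = (e : ℝ) - η := by rw [Nat.cast_sub hη₂.le]
      rw [Nat.cast_min, h1, h2]
    have ha1 : |a| ≤ M := by
      rw [← hga η hη₁.le le_rfl]; exact hM η hη₁.le hη₂.le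
    have ha2 : |a'| ≤ M := by
      rw [← hga' e hη₂ le_rfl]; exact hM e (by omega) le_rfl
    have hMnn : 0 ≤ M := (abs_nonneg a).trans ha1
    have haa : |a - a'| ≤ 2 * M := by
      have := abs_sub a a'
      linarith [abs_sub_abs_le_abs_sub a a', abs_add_le a (-a'), abs_neg a',
        (abs_sub a a' : |a - a'| ≤ |a| + |a'|)]
    have harg : |((e : ℝ) - η) * Real.sqrt (((η : ℝ) - s + 1) /
        (((e : ℝ) - s + 1) * ((e : ℝ) - η)))| ≤
        Real.sqrt (min ((η : ℝ) - s + 1) ((e : ℝ) - η)) := by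
      rw [abs_of_nonneg (by positivity)]
      have heq : ((e : ℝ) - η) * Real.sqrt (((η : ℝ) - s + 1) /
          (((e : ℝ) - s + 1) * ((e : ℝ) - η))) =
          Real.sqrt (((e : ℝ) - η) ^ 2 * ((((η : ℝ) - s + 1)) /
            (((e : ℝ) - s + 1) * ((e : ℝ) - η)))) := by
        rw [Real.sqrt_mul (by positivity), Real.sqrt_sq hn2.le]
      rw [heq]
      apply Real.sqrt_le_sqrt
      rw [show ((e : ℝ) - η) ^ 2 * ((((η : ℝ) - s + 1)) /
          (((e : ℝ) - s + 1) * ((e : ℝ) - η))) =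
          (((η : ℝ) - s + 1) * ((e : ℝ) - η)) / ((e : ℝ) - s + 1) by
        field_simp]
      apply le_min
      · rw [div_le_iff₀ hN]; nlinarith
      · rw [div_le_iff₀ hN]; nlinarith
    rw [hcηL, abs_mul, hm]
    calc |a - a'| * |((e : ℝ) - η) * Real.sqrt (((η : ℝ) - s + 1) /
          (((e : ℝ) - s + 1) * ((e : ℝ) - η)))|
        ≤ (2 * M) * Real.sqrt (min ((η : ℝ) - s + 1) ((e : ℝ) - η)) :=
          mul_le_mul haa harg (abs_nonneg _) (by linarith)
      _ = 2 * M * Real.sqrt (min ((η : ℝ) - s + 1) ((e : ℝ) - η)) := by ring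
end
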